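/- For all m, n ≥ 1, the lexicographic product K_{4m} ∘ complement(K_{2n+1}) is orientable Z_{4m(2n+1)}-distance magic; in particular there exist infinitely many graphs of odd regularity that are orientable Z_N-distance magic where N is the order of the graph. -/

import Mathlib

/-!
Orient the complete multipartite graph by `x → y` iff `s x * s y * τ(i, j) = 1`, where `i`, `j`
are the parts of `x`, `y`, `τ` is the transitive tournament on the parts and `s` is a `±1`
vertex sign. The weight of `x` is then `s x * ∑_{j ≠ i} τ(i, j) * S_j`, where `S_j` is the signed
label sum of part `j`. If every `S_j` equals `N / 2` in `ℤ/N`, the signs act trivially and every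
weight is `(4m - 1) * N / 2`.

Label vertex `q` of part `i` by `4m q + ρ_q(i)` with row signs `(-1)^q`; then
`S_i = 4mn + i + ρ_0(i) - ρ_1(i)`, and `ρ_0`, `ρ_1` are chosen so that this is
`2m(2n+1) = N / 2` for every part but `3m`, where flipping a single sign gives `± 3N / 2`.
-/

open Finset

/-- An orientation of `G` together with a bijective labeling by `ZMod n` whose
vertex weights (sum of labels of out-neighbors minus sum of labels of in-neighbors)
are all equal to some constant `μ`. -/
def orientableDistanceMagic {V : Type*} [Fintype V] [DecidableEq V]
    (G : SimpleGraph V) (n : ℕ) : Prop :=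
  ∃ (D : V → V → Bool) (l : V → ZMod n) (μ : ZMod n),
    Function.Bijective l ∧
    (∀ x y, D x y → G.Adj x y) ∧
    (∀ x y, G.Adj x y → (D x y ↔ ¬ D y x)) ∧
    ∀ x : V, (∑ y ∈ univ.filter (fun y => D x y), l y)
           - (∑ y ∈ univ.filter (fun y => D y x), l y) = μ

/-- The lexicographic product `K_m ∘ complement(K_n)`, i.e. the complete
`m`-partite graph with all parts of size `n`. -/
def KmKnbar (m n : ℕ) : SimpleGraph (Fin m × Fin n) where
  Adj a b := a.1 ≠ b.1
  symm := ⟨fun _ _ h => h.symm⟩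
  loopless := ⟨fun _ h => h rfl⟩

instance (m n : ℕ) : DecidableRel (KmKnbar m n).Adj :=
  fun a b => inferInstanceAs (Decidable (a.1 ≠ b.1))

theorem ZMod.natCast_add_self_eq_zero_of_eq_two_mul {N M : ℕ} (h : N = 2 * M) :
    (M : ZMod N) + M = 0 := by
  rw [← two_mul, ← Nat.cast_ofNat, ← Nat.cast_mul, ← h, ZMod.natCast_self]

theorem ZMod.intCast_mul_eq_of_odd {N M : ℕ} (h : N = 2 * M) {c : ℤ} (hc : Odd c) :
    ((c * M : ℤ) : ZMod N) = M := by
  obtain ⟨j, rfl⟩ := hc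
  have hN : ((2 * M : ℕ) : ZMod N) = 0 := h ▸ ZMod.natCast_self N
  push_cast at hN ⊢
  linear_combination j * hN

theorem Nat.eq_and_eq_of_mul_add_eq {a q q' r r' : ℕ} (hr : r < a) (hr' : r' < a)
    (h : a * q + r = a * q' + r') : q = q' ∧ r = r' := by
  have ha : 0 < a := by omega
  have hq : q = q' := by
    simpa [Nat.mul_add_div ha, Nat.div_eq_of_lt hr, Nat.div_eq_of_lt hr'] using
      congrArg (· / a) h
  subst hq
  exact ⟨rfl, by omega⟩

section SignedOrientation

variable {ι κ A : Type*} [LinearOrder ι]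

def towardSign (i j : ι) : ℤˣ := if i < j then 1 else -1

def edgeSign (s : ι × κ → ℤˣ) (x y : ι × κ) : ℤˣ := s x * s y * towardSign x.1 y.1

def signedOrientation (s : ι × κ → ℤˣ) (x y : ι × κ) : Bool :=
  decide (x.1 ≠ y.1 ∧ edgeSign s x y = 1)

theorem towardSign_swap {i j : ι} (h : i ≠ j) : towardSign j i = -towardSign i j := by
  rcases h.lt_or_gt with h | h <;> simp [towardSign, h, h.not_gt]

theorem edgeSign_swap (s : ι × κ → ℤˣ) {x y : ι × κ} (h : x.1 ≠ y.1) :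
    edgeSign s y x = -edgeSign s x y := by
  simp only [edgeSign, towardSign_swap h, mul_neg, mul_comm (s y)]

theorem signedOrientation_iff {s : ι × κ → ℤˣ} {x y : ι × κ} :
    signedOrientation s x y ↔ x.1 ≠ y.1 ∧ edgeSign s x y = 1 := by
  simp [signedOrientation]

theorem signedOrientation_swap_iff {s : ι × κ → ℤˣ} {x y : ι × κ} (h : x.1 ≠ y.1) :
    signedOrientation s y x ↔ edgeSign s x y = -1 := by
  rw [signedOrientation_iff, edgeSign_swap s h, neg_eq_iff_eq_neg]
  exact and_iff_right (Ne.symm h)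

theorem signedOrientation_iff_not_swap {s : ι × κ → ℤˣ} {x y : ι × κ} (h : x.1 ≠ y.1) :
    signedOrientation s x y ↔ ¬ signedOrientation s y x := by
  rw [signedOrientation_swap_iff h, signedOrientation_iff, and_iff_right h]
  rcases Int.units_eq_one_or (edgeSign s x y) with h' | h' <;> simp [h']

variable [Fintype ι] [Fintype κ] [AddCommGroup A]

theorem sum_signedOrientation_sub (s : ι × κ → ℤˣ) (l : ι × κ → A) (x : ι × κ) :
    (∑ y ∈ univ.filter (fun y => signedOrientation s x y), l y)
      - (∑ y ∈ univ.filter (fun y => signedOrientation s y x), l y)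
      = ∑ y, if x.1 = y.1 then 0 else edgeSign s x y • l y := by
  rw [sum_filter, sum_filter, ← sum_sub_distrib]
  refine sum_congr rfl fun y _ => ?_
  by_cases h : x.1 = y.1
  · simp [signedOrientation, h]
  · rw [if_neg h]
    rcases Int.units_eq_one_or (edgeSign s x y) with h' | h' <;>
      simp [signedOrientation_iff, signedOrientation_swap_iff h, h, h']

theorem units_int_smul_of_add_self {μ : A} (hμ : μ + μ = 0) (u : ℤˣ) : u • μ = μ := by
  rcases Int.units_eq_one_or u with rfl | rfl
  · exact one_smul _ _
  · rw [Units.neg_smul, one_smul, neg_eq_iff_add_eq_zero, hμ]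

theorem sum_edgeSign_smul_of_partSum {s : ι × κ → ℤˣ} {l : ι × κ → A} {μ : A}
    (hμ : μ + μ = 0) (hS : ∀ j, ∑ b, s (j, b) • l (j, b) = μ) (x : ι × κ) :
    (∑ y, if x.1 = y.1 then 0 else edgeSign s x y • l y) = (Fintype.card ι - 1) • μ := by
  have part (j : ι) :
      (∑ b, if x.1 = j then 0 else edgeSign s x (j, b) • l (j, b)) = if x.1 = j then 0 else μ := by
    split_ifs
    · exact sum_const_zero
    · simp_rw [edgeSign, mul_right_comm (s x), mul_smul, ← smul_sum, hS,
        units_int_smul_of_add_self hμ]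
  rw [Fintype.sum_prod_type]
  simp_rw [part]
  simp [sum_ite, ← ne_eq, filter_ne, card_erase_of_mem]

end SignedOrientation

namespace KmKnbar

theorem isRegularOfDegree (m k : ℕ) : (KmKnbar m k).IsRegularOfDegree ((m - 1) * k) := by
  intro v
  have : (KmKnbar m k).neighborFinset v = (univ.erase v.1) ×ˢ univ := by
    ext w
    rw [SimpleGraph.mem_neighborFinset, mem_product, mem_erase]
    simp [KmKnbar, ne_comm]
  rw [SimpleGraph.degree, this, card_product, card_erase_of_mem (mem_univ _), card_univ,
    card_univ, Fintype.card_fin, Fintype.card_fin]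

theorem orientableDistanceMagic_of_partSum {m k N : ℕ} (s : Fin m × Fin k → ℤˣ)
    (l : Fin m × Fin k → ZMod N) (hl : Function.Bijective l) {μ : ZMod N} (hμ : μ + μ = 0)
    (hS : ∀ i, ∑ b, s (i, b) • l (i, b) = μ) :
    orientableDistanceMagic (KmKnbar m k) N :=
  ⟨signedOrientation s, l, (m - 1) • μ, hl, fun _ _ h => (signedOrientation_iff.mp h).1,
    fun _ _ h => signedOrientation_iff_not_swap h, fun x => by
      rw [sum_signedOrientation_sub, sum_edgeSign_smul_of_partSum hμ hS, Fintype.card_fin]⟩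

end KmKnbar

namespace MagicLabeling

/- Rows `0` and `1` are permutations of `{0, …, 4m - 1}` with `ρ_0 i - ρ_1 i = 2m - i` for
`i ≠ 3m`; this cannot hold at every `i`, since `∑ i, (2m - i) = 2m ≠ 0`. -/
def rowPerm (m q i : ℕ) : ℕ :=
  if q = 0 then
    if i = 3 * m then 0
    else if i < 2 * m then 4 * m - 1 - 2 * i
    else if i = 2 * m then 2 * m
    else 8 * m - 2 * i
  else if q = 1 then
    if i < 2 * m then 2 * m - 1 - i
    else if i = 2 * m then 2 * m
    else 6 * m - i
  else i

theorem rowPerm_lt {m i : ℕ} (q : ℕ) (hi : i < 4 * m) : rowPerm m q i < 4 * m := by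
  unfold rowPerm; split_ifs <;> omega

theorem rowPerm_injOn (m q : ℕ) : Set.InjOn (rowPerm m q) (Set.Iio (4 * m)) := by
  intro i hi j hj h
  simp only [Set.mem_Iio] at hi hj
  unfold rowPerm at h; split_ifs at h <;> omega

theorem rowPerm_zero_sub_rowPerm_one {m i : ℕ} (hi : i < 4 * m) (h3 : i ≠ 3 * m) :
    (rowPerm m 0 i : ℤ) - rowPerm m 1 i = 2 * m - i := by
  simp only [rowPerm, one_ne_zero, ↓reduceIte]
  split_ifs <;> omega

theorem rowPerm_of_two_le {m q : ℕ} (hq : 2 ≤ q) (i : ℕ) : rowPerm m q i = i := by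
  unfold rowPerm; split_ifs <;> omega

theorem rowPerm_three_mul {m q : ℕ} (hq : q ≠ 0) : rowPerm m q (3 * m) = 3 * m := by
  unfold rowPerm; split_ifs <;> omega

def label (m k : ℕ) (x : Fin (4 * m) × Fin k) : ZMod (4 * m * k) :=
  ((4 * m * x.2 + rowPerm m x.2 x.1 : ℕ) : ZMod (4 * m * k))

theorem label_injective (m k : ℕ) : Function.Injective (label m k) := by
  rintro ⟨i, q⟩ ⟨i', q'⟩ h
  have hlt {i : Fin (4 * m)} {q : Fin k} : 4 * m * q + rowPerm m q i < 4 * m * k :=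
    (Nat.mul_add_lt_mul_of_lt_of_lt q.isLt (rowPerm_lt _ i.isLt)).trans_eq (mul_comm ..)
  rw [label, label, ZMod.natCast_eq_natCast_iff', Nat.mod_eq_of_lt hlt,
    Nat.mod_eq_of_lt hlt] at h
  obtain ⟨hq, hρ⟩ :=
    Nat.eq_and_eq_of_mul_add_eq (rowPerm_lt _ i.isLt) (rowPerm_lt _ i'.isLt) h
  have hq : q = q' := Fin.ext hq
  subst hq
  exact Prod.ext (Fin.ext (rowPerm_injOn m q i.isLt i'.isLt hρ)) rfl

theorem label_bijective (m k : ℕ) [NeZero (4 * m * k)] : Function.Bijective (label m k) := by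
  rw [Fintype.bijective_iff_injective_and_card]
  exact ⟨label_injective m k, by simp [ZMod.card]⟩

theorem sum_range_neg_one_pow_mul_add (a b : ℤ) (n : ℕ) :
    ∑ q ∈ range (2 * n + 1), (-1) ^ q * (a * q + b) = a * n + b := by
  induction n with
  | zero => simp
  | succ n ih =>
    rw [show 2 * (n + 1) + 1 = 2 * n + 1 + 1 + 1 by ring, sum_range_succ, sum_range_succ, ih]
    simp only [pow_succ, pow_mul]
    push_cast
    ring

theorem sum_range_neg_one_pow_mul_rowPerm {m n : ℕ} (hn : 1 ≤ n) (i : ℕ) :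
    ∑ q ∈ range (2 * n + 1), (-1) ^ q * ((4 * m * q + rowPerm m q i : ℕ) : ℤ)
      = 4 * m * n + i + (rowPerm m 0 i - rowPerm m 1 i) := by
  have hid : ∑ q ∈ range (2 * n + 1), (-1) ^ q * ((rowPerm m q i : ℤ) - i)
      = ((rowPerm m 0 i : ℤ) - i) - ((rowPerm m 1 i : ℤ) - i) := by
    rw [sum_eq_add_of_mem 0 1 (by simp) (by simp; omega) zero_ne_one fun q _ hq => by
      rw [rowPerm_of_two_le (by omega), sub_self, mul_zero]]
    ring
  calc ∑ q ∈ range (2 * n + 1), (-1) ^ q * ((4 * m * q + rowPerm m q i : ℕ) : ℤ)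
      = ∑ q ∈ range (2 * n + 1), (-1) ^ q * (4 * m * q + i : ℤ)
        + ∑ q ∈ range (2 * n + 1), (-1) ^ q * ((rowPerm m q i : ℤ) - i) := by
        rw [← sum_add_distrib]
        refine sum_congr rfl fun q _ => ?_
        push_cast
        ring
    _ = 4 * m * n + i + (rowPerm m 0 i - rowPerm m 1 i) := by
        rw [sum_range_neg_one_pow_mul_add, hid]
        ring

/- Part `3m` has alternating sum `4mn`; flipping the sign of its label `4mq + 3m` in row `q`
hits `N / 2` modulo `N` exactly for `q = n` with `n` odd and `q = 2n` with `n` even. -/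
def flipRow (n : ℕ) : ℕ := if Even n then 2 * n else n

theorem flipRow_ne_zero {n : ℕ} (hn : 1 ≤ n) : flipRow n ≠ 0 := by
  unfold flipRow; split_ifs <;> omega

theorem flipRow_lt (n : ℕ) : flipRow n < 2 * n + 1 := by
  unfold flipRow; split_ifs <;> omega

theorem columnSum_eq_odd_mul {m n i : ℕ} (hn : 1 ≤ n) (hi : i < 4 * m) :
    ∃ c : ℤ, Odd c ∧
      ∑ q ∈ range (2 * n + 1), (-1) ^ q * (if i = 3 * m ∧ q = flipRow n then -1 else 1)
        * ((4 * m * q + rowPerm m q i : ℕ) : ℤ) = c * ((2 * m * (2 * n + 1) : ℕ) : ℤ) := by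
  by_cases h3 : i = 3 * m
  · subst h3
    simp only [true_and]
    have flip (q : ℕ) : (-1) ^ q * (if q = flipRow n then -1 else 1)
        * ((4 * m * q + rowPerm m q (3 * m) : ℕ) : ℤ)
        = (-1) ^ q * ((4 * m * q + rowPerm m q (3 * m) : ℕ) : ℤ)
          - if flipRow n = q then 2 * (-1) ^ q * ((4 * m * q + rowPerm m q (3 * m) : ℕ) : ℤ)
            else 0 := by
      split_ifs with h h' h' <;> first | (exfalso; omega) | ring
    rw [sum_congr rfl fun q _ => flip q, sum_sub_distrib, sum_ite_eq,
      if_pos (mem_range.2 (flipRow_lt n)), sum_range_neg_one_pow_mul_rowPerm hn,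
      rowPerm_three_mul (flipRow_ne_zero hn), rowPerm_three_mul one_ne_zero,
      show rowPerm m 0 (3 * m) = 0 by simp [rowPerm]]
    unfold flipRow
    split_ifs with he
    · refine ⟨-3, by decide, ?_⟩
      rw [pow_mul, neg_one_sq, one_pow]
      push_cast
      ring
    · refine ⟨3, by decide, ?_⟩
      rw [(Nat.not_even_iff_odd.1 he).neg_one_pow]
      push_cast
      ring
  · refine ⟨1, odd_one, ?_⟩
    simp only [h3, false_and, ↓reduceIte, mul_one]
    rw [sum_range_neg_one_pow_mul_rowPerm hn, rowPerm_zero_sub_rowPerm_one hi h3]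
    push_cast
    ring

def sign (m n : ℕ) (x : Fin (4 * m) × Fin (2 * n + 1)) : ℤˣ :=
  (-1) ^ (x.2 : ℕ) * if (x.1 : ℕ) = 3 * m ∧ (x.2 : ℕ) = flipRow n then -1 else 1

theorem sum_sign_smul_label {m n : ℕ} (hn : 1 ≤ n) (i : Fin (4 * m)) :
    ∑ b, sign m n (i, b) • label m (2 * n + 1) (i, b)
      = ((2 * m * (2 * n + 1) : ℕ) : ZMod (4 * m * (2 * n + 1))) := by
  obtain ⟨c, hc, hsum⟩ := columnSum_eq_odd_mul hn i.isLt
  rw [← ZMod.intCast_mul_eq_of_odd (by ring) hc, ← hsum, Int.cast_sum,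
    ← Fin.sum_univ_eq_sum_range]
  refine sum_congr rfl fun b _ => ?_
  rw [Units.smul_def, zsmul_eq_mul, label, sign]
  push_cast
  split_ifs <;> simp

end MagicLabeling

theorem stmt_6 (m n : ℕ) (hm : 1 ≤ m) (hn : 1 ≤ n) :
    (KmKnbar (4 * m) (2 * n + 1)).IsRegularOfDegree ((4 * m - 1) * (2 * n + 1)) ∧
    Odd ((4 * m - 1) * (2 * n + 1)) ∧
    orientableDistanceMagic (KmKnbar (4 * m) (2 * n + 1)) (4 * m * (2 * n + 1)) := by
  refine ⟨KmKnbar.isRegularOfDegree _ _,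
    (Nat.odd_iff.2 (by omega)).mul (Nat.odd_iff.2 (by omega)), ?_⟩
  have : NeZero (4 * m * (2 * n + 1)) := ⟨by positivity⟩
  exact KmKnbar.orientableDistanceMagic_of_partSum (MagicLabeling.sign m n)
    (MagicLabeling.label m _) (MagicLabeling.label_bijective m _)
    (ZMod.natCast_add_self_eq_zero_of_eq_two_mul (by ring)) (MagicLabeling.sum_sign_smul_label hn)
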